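/- arXiv:2012.12895 — 2 statements merged into one kernel-verified Lean document; each statement's English description precedes it below -/
import Mathlib

section
/- (Variance of Hutchinson's estimator bound) If A is a real symmetric positive semi-definite m×m matrix and z is a vector of m independent Rademacher variables, then Var(zᵀAz) ≤ 2 tr(A)², and more precisely Var(zᵀAz) = 2 Σ_{i≠j} A_{i,j}² ≤ 2 tr(A)² when A is PSD. -/
/-- A Rademacher vector: the outcome `ω : Fin m → Bool` is mapped to ±1 entries. -/
def rad {m : ℕ} (ω : Fin m → Bool) (j : Fin m) : ℝ := if ω j then 1 else -1

/-- Expectation over the uniform distribution on `{-1,1}^m`. -/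
noncomputable def expect {m : ℕ} (f : (Fin m → Bool) → ℝ) : ℝ :=
  (∑ ω : Fin m → Bool, f ω) / 2 ^ m

/-- Variance with respect to the uniform distribution on `{-1,1}^m`. -/
noncomputable def varia {m : ℕ} (f : (Fin m → Bool) → ℝ) : ℝ :=
  expect (fun ω => (f ω - expect f) ^ 2)

/-!
Since `zᵢ² = 1`, `zᵀAz - tr A = ∑_{i ≠ j} Aᵢⱼ zᵢ zⱼ`. For `i ≠ j` and `k ≠ l` the
product `zᵢ zⱼ zₖ zₗ` has mean `1` when `{i, j} = {k, l}` and `0` otherwise: flipping the sign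
of an index that occurs only once is a bijection of `{±1}ᵐ` that negates the product. Hence the
variance is `2 ∑_{i ≠ j} Aᵢⱼ²`. For PSD `A` the `2 × 2` principal minors are nonnegative, so
`Aᵢⱼ² ≤ Aᵢᵢ Aⱼⱼ`, and summing over all `i, j` gives `(tr A)²`.
-/

open Finset hiding expect
open Matrix

namespace Matrix

variable {n : Type*}

lemma PosSemidef.sq_apply_le_mul_diag {A : Matrix n n ℝ} (hA : A.PosSemidef) (i j : n) :
    A i j ^ 2 ≤ A i i * A j j := by
  have hdet := (hA.submatrix ![i, j]).det_nonneg
  have hsymm : A j i = A i j := (isHermitian_iff_isSymm.1 hA.isHermitian).apply i j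
  simp only [det_fin_two, submatrix_apply, cons_val_zero, cons_val_one, hsymm] at hdet
  linarith

variable [DecidableEq n] {α : Type*}

def offDiagonal [Zero α] (A : Matrix n n α) : Matrix n n α :=
  fun i j => if i ≠ j then A i j else 0

lemma offDiagonal_apply_self [Zero α] (A : Matrix n n α) (i : n) : A.offDiagonal i i = 0 := by
  simp [offDiagonal]

lemma offDiagonal_apply_sq [MonoidWithZero α] (A : Matrix n n α) (i j : n) :
    A.offDiagonal i j ^ 2 = if i ≠ j then A i j ^ 2 else 0 := by
  simp only [offDiagonal, ite_pow, ne_eq, OfNat.ofNat_ne_zero, not_false_eq_true, zero_pow]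

lemma IsSymm.offDiagonal [Zero α] {A : Matrix n n α} (hA : A.IsSymm) : A.offDiagonal.IsSymm :=
  IsSymm.ext fun i j => by simp [Matrix.offDiagonal, hA.apply i j, eq_comm]

lemma PosSemidef.sum_offDiagonal_sq_le_trace_sq [Fintype n] {A : Matrix n n ℝ}
    (hA : A.PosSemidef) : ∑ i, ∑ j, A.offDiagonal i j ^ 2 ≤ trace A ^ 2 :=
  calc ∑ i, ∑ j, A.offDiagonal i j ^ 2
      ≤ ∑ i, ∑ j, A i i * A j j := by
        gcongr with i _ j _
        rw [offDiagonal_apply_sq]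
        split_ifs
        · exact hA.sq_apply_le_mul_diag i j
        · exact mul_nonneg hA.diag_nonneg hA.diag_nonneg
    _ = trace A ^ 2 := by simp only [trace, sq, sum_mul_sum, diag_apply]

end Matrix

section RademacherSigns

variable {m : ℕ}

lemma rad_mul_self (ω : Fin m → Bool) (i : Fin m) : rad ω i * rad ω i = 1 := by
  unfold rad; split_ifs <;> norm_num

def flipAt (t : Fin m) : Equiv.Perm (Fin m → Bool) :=
  Function.Involutive.toPerm (fun ω => Function.update ω t (!ω t)) fun ω => by simp

lemma flipAt_apply (t : Fin m) (ω : Fin m → Bool) :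
    flipAt t ω = Function.update ω t (!ω t) := rfl

lemma rad_flipAt (t : Fin m) (ω : Fin m → Bool) (i : Fin m) :
    rad (flipAt t ω) i = if i = t then -rad ω i else rad ω i := by
  by_cases h : i = t
  · subst h
    simp only [flipAt_apply, rad, Function.update_self, if_true]
    cases ω i <;> norm_num
  · simp [flipAt_apply, rad, h]

lemma expect_eq_zero_of_flipAt (t : Fin m) {f : (Fin m → Bool) → ℝ}
    (hf : ∀ ω, f (flipAt t ω) = -f ω) : expect f = 0 := by
  have h : ∑ ω, f ω = -∑ ω, f ω :=
    calc ∑ ω, f ω = ∑ ω, f (flipAt t ω) := (Equiv.sum_comp _ f).symm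
      _ = -∑ ω, f ω := by simp [hf]
  simp [expect, show ∑ ω, f ω = 0 by linarith]

lemma expect_const (c : ℝ) : expect (fun _ : Fin m → Bool => c) = c := by
  simp [expect]

lemma expect_const_mul (c : ℝ) (f : (Fin m → Bool) → ℝ) :
    expect (fun ω => c * f ω) = c * expect f := by
  simp only [expect, ← mul_sum, mul_div_assoc]

lemma expect_sum {ι : Type*} (s : Finset ι) (f : ι → (Fin m → Bool) → ℝ) :
    expect (fun ω => ∑ p ∈ s, f p ω) = ∑ p ∈ s, expect (f p) := by
  simp only [expect, sum_div]; exact sum_comm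

lemma expect_rad_mul_rad (i j : Fin m) :
    expect (fun ω => rad ω i * rad ω j) = if i = j then 1 else 0 := by
  split_ifs with h
  · subst h; simp [rad_mul_self, expect_const]
  · exact expect_eq_zero_of_flipAt i fun ω => by simp [rad_flipAt, Ne.symm h]

lemma expect_rad_mul_rad_mul_rad_mul_rad {i j k l : Fin m} (hij : i ≠ j) (hkl : k ≠ l) :
    expect (fun ω => rad ω i * rad ω j * (rad ω k * rad ω l)) =
      if s(i, j) = s(k, l) then 1 else 0 := by
  split_ifs with h
  · have hprod : ∀ ω, rad ω i * rad ω j * (rad ω k * rad ω l) = 1 := by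
      rcases Sym2.eq_iff.1 h with ⟨rfl, rfl⟩ | ⟨rfl, rfl⟩ <;> intro ω
      · simp [mul_mul_mul_comm, rad_mul_self]
      · rw [mul_comm (rad ω j), mul_mul_mul_comm]; simp [rad_mul_self]
    simp [hprod, expect_const]
  · obtain ⟨t, hti, htk, htl⟩ : ∃ t, (t = i ∨ t = j) ∧ t ≠ k ∧ t ≠ l := by
      by_contra! hc
      have hi := hc i (.inl rfl); have hj := hc j (.inr rfl)
      rw [Sym2.eq_iff] at h; grind
    refine expect_eq_zero_of_flipAt t fun ω => ?_
    rcases hti with rfl | rfl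
    · simp [rad_flipAt, Ne.symm hij, Ne.symm htk, Ne.symm htl]
    · simp [rad_flipAt, hij, Ne.symm htk, Ne.symm htl]

lemma expect_quadForm (A : Matrix (Fin m) (Fin m) ℝ) :
    expect (fun ω => ∑ i, ∑ j, A i j * rad ω i * rad ω j) = trace A := by
  simp only [expect_sum, mul_assoc, expect_const_mul, expect_rad_mul_rad, mul_ite, mul_one,
    mul_zero, sum_ite_eq, mem_univ, if_true, trace, diag_apply]

lemma quadForm_sub_trace (A : Matrix (Fin m) (Fin m) ℝ) (ω : Fin m → Bool) :
    ∑ i, ∑ j, A i j * rad ω i * rad ω j - trace A =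
      ∑ i, ∑ j, A.offDiagonal i j * rad ω i * rad ω j := by
  have hsplit : ∀ i j, A i j * rad ω i * rad ω j =
      (if i = j then A i i else 0) + A.offDiagonal i j * rad ω i * rad ω j := by
    intro i j
    by_cases h : i = j
    · subst h; simp [offDiagonal, mul_assoc, rad_mul_self]
    · simp [offDiagonal, h]
  simp only [hsplit, sum_add_distrib, sum_ite_eq, mem_univ, if_true, trace, diag_apply,
    add_sub_cancel_left]

lemma expect_sq_quadForm_of_diag_eq_zero {B : Matrix (Fin m) (Fin m) ℝ} (hB : B.IsSymm)
    (hdiag : ∀ i, B i i = 0) :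
    expect (fun ω => (∑ i, ∑ j, B i j * rad ω i * rad ω j) ^ 2) = 2 * ∑ i, ∑ j, B i j ^ 2 := by
  have hterm : ∀ i j k l,
      expect (fun ω => B i j * rad ω i * rad ω j * (B k l * rad ω k * rad ω l)) =
        B i j * (B k l * expect (fun ω => rad ω i * rad ω j * (rad ω k * rad ω l))) := by
    intro i j k l
    rw [← expect_const_mul, ← expect_const_mul]
    congr 1; funext ω; ring
  have hinner : ∀ i j, i ≠ j →
      ∑ k, ∑ l, B k l * expect (fun ω => rad ω i * rad ω j * (rad ω k * rad ω l)) =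
        2 * B i j := by
    intro i j hij
    rw [← Fintype.sum_prod_type' (fun k l => B k l *
      expect (fun ω => rad ω i * rad ω j * (rad ω k * rad ω l))),
      Fintype.sum_eq_add (i, j) (j, i) (by simp [hij])]
    · simp [expect_rad_mul_rad_mul_rad_mul_rad, hij, Ne.symm hij, Sym2.eq_swap, hB.apply i j]
      ring
    · rintro ⟨k, l⟩ ⟨hne_ij, hne_ji⟩
      by_cases hkl : k = l
      · simp [hkl, hdiag]
      · rw [expect_rad_mul_rad_mul_rad_mul_rad hij hkl, if_neg, mul_zero]
        rw [Sym2.eq_iff]; grind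
  calc expect (fun ω => (∑ i, ∑ j, B i j * rad ω i * rad ω j) ^ 2)
      = ∑ i, ∑ j, B i j *
          ∑ k, ∑ l, B k l * expect (fun ω => rad ω i * rad ω j * (rad ω k * rad ω l)) := by
        simp_rw [sq, sum_mul]
        simp only [mul_sum, expect_sum, hterm]
    _ = ∑ i, ∑ j, 2 * B i j ^ 2 := by
        refine sum_congr rfl fun i _ => sum_congr rfl fun j _ => ?_
        by_cases hij : i = j
        · simp [hij, hdiag]
        · rw [hinner i j hij]; ring
    _ = 2 * ∑ i, ∑ j, B i j ^ 2 := by simp only [mul_sum]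

end RademacherSigns

theorem hutchinson_variance_bound {m : ℕ} (A : Matrix (Fin m) (Fin m) ℝ)
    (hA : A.PosSemidef) :
    varia (fun ω => ∑ i, ∑ j, A i j * rad ω i * rad ω j) =
      2 * ∑ i, ∑ j, (if i ≠ j then A i j ^ 2 else 0) ∧
    varia (fun ω => ∑ i, ∑ j, A i j * rad ω i * rad ω j) ≤ 2 * Matrix.trace A ^ 2 := by
  have hsymm : A.IsSymm := isHermitian_iff_isSymm.1 hA.isHermitian
  have hvar : varia (fun ω => ∑ i, ∑ j, A i j * rad ω i * rad ω j) =
      2 * ∑ i, ∑ j, A.offDiagonal i j ^ 2 := by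
    simp only [varia, expect_quadForm, quadForm_sub_trace]
    exact expect_sq_quadForm_of_diag_eq_zero hsymm.offDiagonal A.offDiagonal_apply_self
  refine ⟨by simp only [hvar, offDiagonal_apply_sq], ?_⟩
  rw [hvar]
  gcongr
  exact hA.sum_offDiagonal_sq_le_trace_sq
end

section
/- (Hypercontractivity for degree-2 Rademacher chaos, (2,d) version) Let F = Σ_{j≠j'} a_{j,j'} z_j z_{j'} be a homogeneous degree-2 multilinear polynomial in independent Rademacher variables z_1,...,z_m. Then for every integer d ≥ 2, ‖F‖_d ≤ (d-1) ‖F‖_2, where ‖F‖_d = (E|F|^d)^{1/d}. -/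
/-
Bonami's induction on the number of variables. Splitting off the first variable z₀, a polynomial of
degree ≤ k is X + z₀ Y with deg X ≤ k and deg Y ≤ k - 1. The two-point inequality
  (|a + b|^d + |a - b|^d) / 2 ≤ (a² + (d - 1) b²)^(d/2),
applied pointwise and followed by Minkowski's inequality in L^(d/2), gives
‖X + z₀ Y‖_d² ≤ ‖X‖_d² + (d - 1) ‖Y‖_d², hence ‖f‖_d² ≤ (d - 1)^k ‖f‖_2² by induction.
After squaring, the two-point inequality compares the coefficients of
(a + b)^(2d) + (a - b)^(2d) + 2 (a² - b²)^d with those of 4 (a² + (d - 1) b²)^d.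
-/

open Real
open scoped BigOperators

section

open Finset

theorem Nat.cast_choose_succ_mul (n k : ℕ) :
    (n.choose (k + 1) : ℝ) * (k + 1) = n.choose k * (n - k) := by
  rcases le_or_gt k n with hkn | hnk
  · have h := congrArg (Nat.cast (R := ℝ)) (Nat.choose_succ_right_eq n k)
    push_cast [Nat.cast_sub hkn] at h
    exact h
  · simp [Nat.choose_eq_zero_of_lt hnk, Nat.choose_eq_zero_of_lt (Nat.lt_succ_of_lt hnk)]

theorem Nat.cast_choose_add_two_mul (n k : ℕ) :
    (n.choose (k + 2) : ℝ) * ((k + 1) * (k + 2)) = n.choose k * ((n - k) * (n - k - 1)) := by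
  have h₁ := Nat.cast_choose_succ_mul n k
  have h₂ := Nat.cast_choose_succ_mul n (k + 1)
  push_cast at h₂
  linear_combination ((k : ℝ) + 1) * h₂ + ((n : ℝ) - k - 1) * h₁

/- Read with `x = d - 1`: the ratio `C(2d, 2i) / C(d, i)` is multiplied by `(2x - 2i + 1) / (2i + 1)`
from `i` to `i + 1`, and this inequality says the bound `2xⁱ - (-1)ⁱ` of
`choose_two_mul_add_neg_one_pow_mul_le` grows at least as fast. -/
theorem mul_two_mul_pow_sub_neg_one_pow_le {x : ℝ} (hx : 1 ≤ x) (i : ℕ) :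
    (2 * x - 2 * i + 1) * (2 * x ^ i - (-1) ^ i) ≤ (2 * i + 1) * (2 * x ^ (i + 1) + (-1) ^ i) := by
  have hcoef : 0 ≤ (4 * (i : ℝ) - 2) * x ^ i + 2 * (-1) ^ i := by
    rcases i with _ | i
    · norm_num
    · have : 1 ≤ x ^ (i + 1) := one_le_pow₀ hx
      rcases neg_one_pow_eq_or ℝ (i + 1) with h | h <;> rw [h] <;> push_cast <;> nlinarith
  linear_combination (x + 1) * hcoef

theorem choose_two_mul_add_neg_one_pow_mul_le {d : ℕ} (hd : 2 ≤ d) (i : ℕ) :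
    ((2 * d).choose (2 * i) : ℝ) + (-1) ^ i * d.choose i ≤ 2 * ((d : ℝ) - 1) ^ i * d.choose i := by
  induction i with
  | zero => norm_num
  | succ i ih =>
    set x : ℝ := d - 1 with hx_def
    have hx : 1 ≤ x := by rw [hx_def]; linarith [show (2 : ℝ) ≤ d by exact_mod_cast hd]
    have hB := Nat.cast_choose_add_two_mul (2 * d) (2 * i)
    push_cast at hB
    have hc := Nat.cast_choose_succ_mul d i
    have hpos : 0 ≤ (2 * (d : ℝ) - 2 * i) * (2 * d - 2 * i - 1) := by
      rcases le_or_gt d i with hdi | hid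
      · have : (d : ℝ) ≤ i := by exact_mod_cast hdi
        nlinarith
      · have : (i : ℝ) + 1 ≤ d := by exact_mod_cast hid
        nlinarith
    have key : ((2 * d).choose (2 * i + 2) : ℝ) * ((2 * i + 1) * (2 * i + 2)) ≤
        (2 * x ^ (i + 1) + (-1) ^ i) * d.choose (i + 1) * ((2 * i + 1) * (2 * i + 2)) :=
      calc ((2 * d).choose (2 * i + 2) : ℝ) * ((2 * i + 1) * (2 * i + 2))
          = (2 * d).choose (2 * i) * ((2 * d - 2 * i) * (2 * d - 2 * i - 1)) := hB
        _ ≤ (2 * x ^ i - (-1) ^ i) * d.choose i * ((2 * d - 2 * i) * (2 * d - 2 * i - 1)) :=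
          mul_le_mul_of_nonneg_right (by linarith) hpos
        _ = 2 * (d.choose (i + 1) * (i + 1)) * ((2 * x - 2 * i + 1) * (2 * x ^ i - (-1) ^ i)) := by
          rw [hc, hx_def]; ring
        _ ≤ 2 * (d.choose (i + 1) * (i + 1)) * ((2 * i + 1) * (2 * x ^ (i + 1) + (-1) ^ i)) :=
          mul_le_mul_of_nonneg_left (mul_two_mul_pow_sub_neg_one_pow_le hx i) (by positivity)
        _ = (2 * x ^ (i + 1) + (-1) ^ i) * d.choose (i + 1) * ((2 * i + 1) * (2 * i + 2)) := by ring
    have := le_of_mul_le_mul_right key (by positivity)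
    rw [show 2 * (i + 1) = 2 * i + 2 by ring, pow_succ]
    linarith

theorem sum_range_two_mul_add_one_eq_even_add_odd {M : Type*} [AddCommMonoid M] (f : ℕ → M)
    (n : ℕ) :
    ∑ k ∈ range (2 * n + 1), f k =
      ∑ i ∈ range (n + 1), f (2 * i) + ∑ i ∈ range n, f (2 * i + 1) := by
  induction n with
  | zero => simp
  | succ n ih =>
    rw [sum_range_succ (fun i => f (2 * i)) (n + 1), sum_range_succ (fun i => f (2 * i + 1)) n,
      show 2 * (n + 1) + 1 = 2 * n + 1 + 1 + 1 by ring, sum_range_succ, sum_range_succ, ih,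
      show 2 * n + 1 + 1 = 2 * (n + 1) by ring]
    abel

theorem add_pow_add_sub_pow_eq_sum (a b : ℝ) (n : ℕ) :
    (a + b) ^ (2 * n) + (a - b) ^ (2 * n) =
      ∑ i ∈ range (n + 1), 2 * ((b ^ 2) ^ i * (a ^ 2) ^ (n - i)) * (2 * n).choose (2 * i) := by
  rw [add_comm a b, sub_eq_neg_add, add_pow, add_pow, ← sum_add_distrib,
    sum_range_two_mul_add_one_eq_even_add_odd]
  have hodd : ∀ i, b ^ (2 * i + 1) * a ^ (2 * n - (2 * i + 1)) * ((2 * n).choose (2 * i + 1) : ℝ) +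
      (-b) ^ (2 * i + 1) * a ^ (2 * n - (2 * i + 1)) * (2 * n).choose (2 * i + 1) = 0 := fun i => by
    rw [Odd.neg_pow ⟨i, rfl⟩]; ring
  simp only [hodd, sum_const_zero, add_zero]
  refine sum_congr rfl fun i _ => ?_
  rw [Even.neg_pow ⟨i, two_mul i⟩, ← Nat.mul_sub, pow_mul, pow_mul]
  ring

theorem sq_sub_sq_pow_eq_sum (a b : ℝ) (n : ℕ) :
    (a ^ 2 - b ^ 2) ^ n =
      ∑ i ∈ range (n + 1), (-1) ^ i * ((b ^ 2) ^ i * (a ^ 2) ^ (n - i)) * n.choose i := by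
  rw [sub_eq_neg_add, add_pow]
  refine sum_congr rfl fun i _ => ?_
  rw [neg_pow]; ring

theorem add_pow_add_sub_pow_sq_le {d : ℕ} (hd : 2 ≤ d) (a b : ℝ) :
    ((a + b) ^ d + (a - b) ^ d) ^ 2 ≤ 4 * (a ^ 2 + (d - 1) * b ^ 2) ^ d := by
  have hL : ((a + b) ^ d + (a - b) ^ d) ^ 2 = ∑ i ∈ range (d + 1),
      2 * ((b ^ 2) ^ i * (a ^ 2) ^ (d - i)) * ((2 * d).choose (2 * i) + (-1) ^ i * d.choose i) := by
    rw [show ((a + b) ^ d + (a - b) ^ d) ^ 2 =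
        (a + b) ^ (2 * d) + (a - b) ^ (2 * d) + 2 * (a ^ 2 - b ^ 2) ^ d by
      rw [show a ^ 2 - b ^ 2 = (a + b) * (a - b) by ring, mul_pow]; ring,
      add_pow_add_sub_pow_eq_sum, sq_sub_sq_pow_eq_sum, mul_sum, ← sum_add_distrib]
    exact sum_congr rfl fun i _ => by ring
  have hR : 4 * (a ^ 2 + (d - 1) * b ^ 2) ^ d = ∑ i ∈ range (d + 1),
      2 * ((b ^ 2) ^ i * (a ^ 2) ^ (d - i)) * (2 * ((d : ℝ) - 1) ^ i * d.choose i) := by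
    rw [add_comm, add_pow, mul_sum]
    refine sum_congr rfl fun i _ => ?_
    rw [mul_pow]; ring
  rw [hL, hR]
  exact sum_le_sum fun i _ =>
    mul_le_mul_of_nonneg_left (choose_two_mul_add_neg_one_pow_mul_le hd i) (by positivity)

theorem abs_pow_add_abs_pow_of_mul_nonneg {x y : ℝ} (n : ℕ) (h : 0 ≤ x * y) :
    |x| ^ n + |y| ^ n = |x ^ n + y ^ n| := by
  rw [← abs_pow, ← abs_pow, eq_comm, abs_add_eq_add_abs_iff, ← mul_nonneg_iff, ← mul_pow]
  exact pow_nonneg h n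

theorem abs_add_pow_add_abs_sub_pow_sq_le {d : ℕ} (hd : 2 ≤ d) (a b : ℝ) :
    (|a + b| ^ d + |a - b| ^ d) ^ 2 ≤ 4 * (a ^ 2 + (d - 1) * b ^ 2) ^ d := by
  have hd' : (2 : ℝ) ≤ d := by exact_mod_cast hd
  -- If `b² ≤ a²` then `a + b` and `a - b` have the same sign; otherwise swap the roles of `a`, `b`.
  rcases le_total (b ^ 2) (a ^ 2) with h | h
  · rw [abs_pow_add_abs_pow_of_mul_nonneg d (by nlinarith), sq_abs]
    exact add_pow_add_sub_pow_sq_le hd a b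
  · calc (|a + b| ^ d + |a - b| ^ d) ^ 2 = ((b + a) ^ d + (b - a) ^ d) ^ 2 := by
          rw [add_comm a b, abs_sub_comm, abs_pow_add_abs_pow_of_mul_nonneg d (by nlinarith),
            sq_abs]
      _ ≤ 4 * (b ^ 2 + (d - 1) * a ^ 2) ^ d := add_pow_add_sub_pow_sq_le hd b a
      _ ≤ 4 * (a ^ 2 + (d - 1) * b ^ 2) ^ d := by
          gcongr 4 * ?_ ^ d
          · nlinarith
          · nlinarith

theorem abs_add_pow_add_abs_sub_pow_div_two_le {d : ℕ} (hd : 2 ≤ d) (a b : ℝ) :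
    (|a + b| ^ d + |a - b| ^ d) / 2 ≤ (a ^ 2 + (d - 1) * b ^ 2) ^ ((d : ℝ) / 2) := by
  have hR : 0 ≤ a ^ 2 + (d - 1) * b ^ 2 := by
    have : (2 : ℝ) ≤ d := by exact_mod_cast hd
    nlinarith
  have hsq : ((a ^ 2 + (d - 1) * b ^ 2) ^ ((d : ℝ) / 2)) ^ 2 = (a ^ 2 + (d - 1) * b ^ 2) ^ d := by
    rw [← rpow_natCast _ 2, ← rpow_mul hR, ← rpow_natCast]
    norm_num
  rw [← pow_le_pow_iff_left₀ (by positivity) (rpow_nonneg hR _) two_ne_zero, hsq, div_pow]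
  linarith [abs_add_pow_add_abs_sub_pow_sq_le hd a b]

theorem expect_Lp_add_le {ι : Type*} [Fintype ι] {p : ℝ} (hp : 1 ≤ p) {f g : ι → ℝ}
    (hf : ∀ i, 0 ≤ f i) (hg : ∀ i, 0 ≤ g i) :
    (𝔼 i, (f i + g i) ^ p) ^ (1 / p) ≤ (𝔼 i, f i ^ p) ^ (1 / p) + (𝔼 i, g i ^ p) ^ (1 / p) := by
  have hsum : ∀ h : ι → ℝ, (∀ i, 0 ≤ h i) → 0 ≤ ∑ i, h i ^ p := fun h hh =>
    sum_nonneg fun i _ => rpow_nonneg (hh i) p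
  have hcard : (0 : ℝ) ≤ Fintype.card ι := Nat.cast_nonneg _
  simp only [Fintype.expect_eq_sum_div_card]
  rw [div_rpow (hsum _ fun i => add_nonneg (hf i) (hg i)) hcard, div_rpow (hsum f hf) hcard,
    div_rpow (hsum g hg) hcard, ← add_div]
  exact div_le_div_of_nonneg_right (Lp_add_le_of_nonneg univ hp (fun i _ => hf i) fun i _ => hg i)
    (rpow_nonneg hcard _)

theorem sq_rpow_half_eq_abs_pow (x : ℝ) (d : ℕ) : (x ^ 2) ^ ((d : ℝ) / 2) = |x| ^ d := by
  rw [← sq_abs, ← rpow_natCast |x| 2, ← rpow_mul (abs_nonneg x),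
    show ((2 : ℕ) : ℝ) * (d / 2) = d by push_cast; ring, rpow_natCast]

theorem expect_two_point_rpow_le {ι : Type*} [Fintype ι] {d : ℕ} (hd : 2 ≤ d) (X Y : ι → ℝ) :
    (𝔼 i, (|X i + Y i| ^ d + |X i - Y i| ^ d) / 2) ^ (2 / (d : ℝ)) ≤
      (𝔼 i, |X i| ^ d) ^ (2 / (d : ℝ)) + (d - 1) * (𝔼 i, |Y i| ^ d) ^ (2 / (d : ℝ)) := by
  have hd' : (2 : ℝ) ≤ d := by exact_mod_cast hd
  have hd1 : (0 : ℝ) ≤ d - 1 := by linarith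
  set p : ℝ := d / 2
  have hp : 2 / (d : ℝ) = 1 / p := by simp only [p]; rw [one_div_div]
  rw [hp]
  calc (𝔼 i, (|X i + Y i| ^ d + |X i - Y i| ^ d) / 2) ^ (1 / p)
      ≤ (𝔼 i, (X i ^ 2 + (d - 1) * Y i ^ 2) ^ p) ^ (1 / p) :=
        rpow_le_rpow (expect_nonneg fun i _ => by positivity)
          (expect_le_expect fun i _ => abs_add_pow_add_abs_sub_pow_div_two_le hd _ _)
          (by positivity)
    _ ≤ (𝔼 i, (X i ^ 2) ^ p) ^ (1 / p) + (𝔼 i, ((d - 1) * Y i ^ 2) ^ p) ^ (1 / p) :=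
        expect_Lp_add_le (by simp only [p]; linarith) (fun i => sq_nonneg _)
          fun i => mul_nonneg hd1 (sq_nonneg _)
    _ = (𝔼 i, |X i| ^ d) ^ (1 / p) + (d - 1) * (𝔼 i, |Y i| ^ d) ^ (1 / p) := by
        have habs : ∀ x : ℝ, (x ^ 2) ^ p = |x| ^ d := fun x => sq_rpow_half_eq_abs_pow x d
        simp only [mul_rpow hd1 (sq_nonneg _), ← mul_expect, habs]
        rw [mul_rpow (rpow_nonneg hd1 _) (expect_nonneg fun i _ => by positivity), ← rpow_mul hd1,
          mul_one_div_cancel (by positivity), rpow_one]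

theorem expect_cube_succ {m : ℕ} (f : (Fin (m + 1) → Bool) → ℝ) :
    𝔼 ω, f ω = 𝔼 ω, (f (Fin.cons true ω) + f (Fin.cons false ω)) / 2 := by
  rw [← Fintype.expect_equiv (Fin.consEquiv fun _ => Bool) (fun q => f (Fin.cons q.1 q.2)) f
    fun _ => rfl, ← univ_product_univ, expect_product' univ univ fun b ω => f (Fin.cons b ω),
    expect_comm]
  refine expect_congr rfl fun ω _ => ?_
  rw [Fintype.expect_eq_sum_div_card, Fintype.sum_bool, Fintype.card_bool, Nat.cast_two]

/-- Multilinear polynomials of degree `≤ k` in the variables `rad ω j`, built by splitting off the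
first variable `z₀`: `X + z₀ Y` with `deg X ≤ k` and `deg Y ≤ k - 1`. -/
inductive HasDegreeLE : ℕ → {m : ℕ} → ((Fin m → Bool) → ℝ) → Prop
  | const (k : ℕ) {m : ℕ} (c : ℝ) : HasDegreeLE k fun _ : Fin m → Bool => c
  | cons {k m : ℕ} {X Y : (Fin m → Bool) → ℝ} : HasDegreeLE (k + 1) X → HasDegreeLE k Y →
      HasDegreeLE (k + 1) fun ω : Fin (m + 1) → Bool => X (Fin.tail ω) + rad ω 0 * Y (Fin.tail ω)

theorem HasDegreeLE.bonami {d : ℕ} (hd : 2 ≤ d) {k m : ℕ} {f : (Fin m → Bool) → ℝ}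
    (hf : HasDegreeLE k f) :
    (𝔼 ω, |f ω| ^ d) ^ (2 / (d : ℝ)) ≤ ((d : ℝ) - 1) ^ k * 𝔼 ω, f ω ^ 2 := by
  have hd' : (2 : ℝ) ≤ d := by exact_mod_cast hd
  induction hf with
  | const k c =>
    rw [Fintype.expect_const, Fintype.expect_const, ← sq_rpow_half_eq_abs_pow, ← inv_div,
      rpow_inv_rpow (sq_nonneg c) (by positivity)]
    exact le_mul_of_one_le_left (sq_nonneg c) (one_le_pow₀ (by linarith))
  | @cons k m X Y _ _ ihX ihY =>
    rw [expect_cube_succ, expect_cube_succ]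
    simp only [Fin.tail_cons, rad, Fin.cons_zero, if_true, if_false, Bool.false_eq_true, one_mul,
      neg_one_mul, ← sub_eq_add_neg]
    calc (𝔼 ω, (|X ω + Y ω| ^ d + |X ω - Y ω| ^ d) / 2) ^ (2 / (d : ℝ))
        ≤ (𝔼 ω, |X ω| ^ d) ^ (2 / (d : ℝ)) + (d - 1) * (𝔼 ω, |Y ω| ^ d) ^ (2 / (d : ℝ)) :=
          expect_two_point_rpow_le hd X Y
      _ ≤ ((d : ℝ) - 1) ^ (k + 1) * 𝔼 ω, X ω ^ 2 + (d - 1) * (((d : ℝ) - 1) ^ k * 𝔼 ω, Y ω ^ 2) :=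
          add_le_add ihX (mul_le_mul_of_nonneg_left ihY (by linarith))
      _ = ((d : ℝ) - 1) ^ (k + 1) * 𝔼 ω, ((X ω + Y ω) ^ 2 + (X ω - Y ω) ^ 2) / 2 := by
          rw [expect_congr rfl fun ω _ => show ((X ω + Y ω) ^ 2 + (X ω - Y ω) ^ 2) / 2 =
            X ω ^ 2 + Y ω ^ 2 by ring, expect_add_distrib]
          ring

theorem rad_tail {m : ℕ} (ω : Fin (m + 1) → Bool) (j : Fin m) : rad (Fin.tail ω) j = rad ω j.succ :=
  rfl

theorem hasDegreeLE_one_sum_mul_rad {m : ℕ} (c : Fin m → ℝ) :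
    HasDegreeLE 1 fun ω => ∑ j, c j * rad ω j := by
  induction m with
  | zero => simpa using HasDegreeLE.const 1 (m := 0) 0
  | succ m ih =>
    convert (ih fun j => c j.succ).cons (HasDegreeLE.const 0 (c 0)) using 1
    funext ω
    simp only [Fin.sum_univ_succ, rad_tail]
    ring

theorem hasDegreeLE_two_sum_offDiag {m : ℕ} (a : Fin m → Fin m → ℝ) :
    HasDegreeLE 2 fun ω => ∑ j, ∑ j', if j ≠ j' then a j j' * rad ω j * rad ω j' else 0 := by
  induction m with
  | zero => simpa using HasDegreeLE.const 2 (m := 0) 0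
  | succ m ih =>
    convert (ih fun j j' => a j.succ j'.succ).cons
      (hasDegreeLE_one_sum_mul_rad fun j => a 0 j.succ + a j.succ 0) using 1
    funext ω
    simp only [Fin.sum_univ_succ, rad_tail, ne_eq, Fin.succ_ne_zero, (Fin.succ_ne_zero _).symm,
      Fin.succ_inj, not_true, not_false_eq_true, if_true, if_false, zero_add, mul_sum,
      ← sum_add_distrib]
    exact sum_congr rfl fun j _ => by ring

end

theorem expect_eq_finsetExpect {m : ℕ} (f : (Fin m → Bool) → ℝ) : expect f = 𝔼 ω, f ω := by
  rw [_root_.expect, Fintype.expect_eq_sum_div_card]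
  simp

theorem hypercontractivity_degree_two {m : ℕ} (a : Fin m → Fin m → ℝ)
    (F : (Fin m → Bool) → ℝ)
    (hF : F = fun ω => ∑ j, ∑ j', if j ≠ j' then a j j' * rad ω j * rad ω j' else 0)
    (d : ℕ) (hd : 2 ≤ d) :
    (expect (fun ω => |F ω| ^ d)) ^ ((1 : ℝ) / d) ≤
      ((d : ℝ) - 1) * (expect (fun ω => F ω ^ 2)) ^ ((1 : ℝ) / 2) := by
  have hbonami := (hF ▸ hasDegreeLE_two_sum_offDiag a).bonami hd
  rw [expect_eq_finsetExpect, expect_eq_finsetExpect]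
  have hE : 0 ≤ 𝔼 ω, |F ω| ^ d := Finset.expect_nonneg fun ω _ => by positivity
  have hd1 : (0 : ℝ) ≤ d - 1 := by linarith [show (2 : ℝ) ≤ d by exact_mod_cast hd]
  calc (𝔼 ω, |F ω| ^ d) ^ ((1 : ℝ) / d) = ((𝔼 ω, |F ω| ^ d) ^ (2 / (d : ℝ))) ^ ((1 : ℝ) / 2) := by
        rw [← rpow_mul hE]; ring_nf
    _ ≤ (((d : ℝ) - 1) ^ 2 * 𝔼 ω, F ω ^ 2) ^ ((1 : ℝ) / 2) := by gcongr
    _ = ((d : ℝ) - 1) * (𝔼 ω, F ω ^ 2) ^ ((1 : ℝ) / 2) := by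
        rw [mul_rpow (by positivity) (Finset.expect_nonneg fun ω _ => by positivity),
          ← sqrt_eq_rpow, sqrt_sq hd1]
end
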